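/- arXiv:1708.08345 — 3 statements merged into one kernel-verified Lean document; each statement's English description precedes it below -/
import Mathlib

section
/- Let λ > 0, α > 0, t > 0 and n a positive natural number. Then the n-th derivative of the function t ↦ E_{α,1}(−λ t^α) satisfies d^n/dt^n E_{α,1}(−λ t^α) = −λ t^{α−n} E_{α,α−n+1}(−λ t^α). -/
open Real Filter Set

/-!
Termwise, `s ^ β * E_{α,β+1}(c s^α) = ∑ₖ cᵏ s^{kα+β} / Γ(kα+β+1)`, and since
`d/ds (s^p / Γ(p+1)) = s^{p-1} / Γ(p)`, differentiating lowers `β` by one; termwise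
differentiation is legitimate because `Γ` eventually dominates every exponential. After `n`
steps `β = -n`, and the recurrence `E_{α,β}(z) = 1/Γ(β) + z E_{α,α+β}(z)` together with
`1/Γ(1-n) = 0` for `n ≥ 1` turns `t^{-n} E_{α,1-n}(-λ t^α)` into
`-λ t^{α-n} E_{α,α-n+1}(-λ t^α)`.
-/

/-- The Mittag-Leffler function `E_{α,β}(z) = ∑ₖ zᵏ / Γ(kα+β)` (real arguments);
terms where `Γ` has a pole contribute `0`, following Mathlib's convention `x/0 = 0`. -/
noncomputable def mittagLeffler (α β z : ℝ) : ℝ :=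
  ∑' k : ℕ, z ^ k / Real.Gamma (k * α + β)

theorem Real.eventually_rpow_le_Gamma {R : ℝ} (hR : 1 ≤ R) :
    ∀ᶠ y in atTop, R ^ y ≤ Gamma y := by
  obtain ⟨N, hN⟩ := eventually_atTop.1 <|
    (FloorSemiring.tendsto_pow_div_factorial_atTop R).eventually
      (ge_mem_nhds (by positivity : (0 : ℝ) < (R ^ 2)⁻¹))
  filter_upwards [eventually_ge_atTop ((N : ℝ) + 2)] with y hy
  set n := ⌊y - 1⌋₊
  have hNn : N ≤ n := Nat.le_floor (by linarith)
  have hny : (n : ℝ) + 1 ≤ y := by linarith [Nat.floor_le (by linarith : 0 ≤ y - 1)]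
  have hyn : y ≤ n + 2 := by linarith [Nat.lt_floor_add_one (y - 1)]
  have hn : (1 : ℝ) ≤ n := by exact_mod_cast Nat.le_floor (by push_cast; linarith)
  have hpow : R ^ 2 * R ^ n ≤ (n.factorial : ℝ) := by
    have := hN n hNn
    rw [div_le_iff₀ (by positivity)] at this
    calc R ^ 2 * R ^ n ≤ R ^ 2 * ((R ^ 2)⁻¹ * n.factorial) := by gcongr
      _ = (n.factorial : ℝ) := by field_simp
  calc R ^ y ≤ R ^ ((n + 2 : ℕ) : ℝ) :=
        rpow_le_rpow_of_exponent_le hR (by push_cast; linarith)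
    _ = R ^ 2 * R ^ n := by rw [rpow_natCast, pow_add, mul_comm]
    _ ≤ Gamma (n + 1) := by rwa [Gamma_nat_eq_factorial]
    _ ≤ Gamma y := Gamma_strictMonoOn_Ici.monotoneOn
        (by simp only [mem_Ici]; linarith) (by simp only [mem_Ici]; linarith) hny

theorem summable_pow_div_abs_Gamma {α : ℝ} (hα : 0 < α) (β : ℝ) {r : ℝ} (hr : 0 ≤ r) :
    Summable fun k : ℕ => r ^ k / |Gamma (k * α + β)| := by
  set R := (r + 1) ^ α⁻¹
  have hR : 1 ≤ R := one_le_rpow (by linarith) (by positivity)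
  have hRα : R ^ α = r + 1 := by
    rw [← rpow_mul (by linarith), inv_mul_cancel₀ hα.ne', rpow_one]
  have hexp : Tendsto (fun k : ℕ => (k : ℝ) * α + β) atTop atTop :=
    tendsto_atTop_add_const_right _ β (tendsto_natCast_atTop_atTop.atTop_mul_const hα)
  have hgeom : Summable fun k : ℕ => (r / (r + 1)) ^ k :=
    summable_geometric_of_lt_one (by positivity) ((div_lt_one (by linarith)).2 (by linarith))
  refine .of_norm_bounded_eventually_nat (hgeom.mul_left (R ^ β)⁻¹) ?_
  filter_upwards [hexp.eventually (eventually_rpow_le_Gamma hR)] with k hk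
  have hRk : R ^ ((k : ℝ) * α + β) = R ^ β * (r + 1) ^ k := by
    rw [rpow_add (by linarith), mul_comm (k : ℝ), rpow_mul (by linarith), hRα, rpow_natCast,
      mul_comm]
  have hpos : 0 < R ^ ((k : ℝ) * α + β) := by positivity
  rw [norm_div, norm_pow, Real.norm_eq_abs, Real.norm_eq_abs, abs_abs, abs_of_nonneg hr,
    abs_of_pos (hpos.trans_le hk)]
  calc r ^ k / Gamma (k * α + β) ≤ r ^ k / R ^ ((k : ℝ) * α + β) := by gcongr
    _ = (R ^ β)⁻¹ * (r / (r + 1)) ^ k := by rw [hRk, div_pow]; field_simp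

theorem summable_mittagLeffler {α : ℝ} (hα : 0 < α) (β z : ℝ) :
    Summable fun k : ℕ => z ^ k / Gamma (k * α + β) :=
  .of_norm <| by
    simpa only [norm_div, norm_pow, Real.norm_eq_abs] using
      summable_pow_div_abs_Gamma hα β (abs_nonneg z)

theorem mittagLeffler_eq_inv_Gamma_add_mul {α : ℝ} (hα : 0 < α) (β z : ℝ) :
    mittagLeffler α β z = (Gamma β)⁻¹ + z * mittagLeffler α (α + β) z := by
  rw [mittagLeffler, (summable_mittagLeffler hα β z).tsum_eq_zero_add, mittagLeffler,
    ← tsum_mul_left]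
  congr 1
  · simp
  · refine tsum_congr fun k => ?_
    rw [pow_succ, show ((k + 1 : ℕ) : ℝ) * α + β = k * α + (α + β) by push_cast; ring]
    ring

theorem hasDerivAt_rpow_div_Gamma (p : ℝ) {s : ℝ} (hs : 0 < s) :
    HasDerivAt (fun y : ℝ => y ^ p / Gamma (p + 1)) (s ^ (p - 1) / Gamma p) s := by
  refine ((hasDerivAt_rpow_const (Or.inl hs.ne')).div_const (Gamma (p + 1))).congr_deriv ?_
  rcases eq_or_ne p 0 with rfl | hp
  · simp -- both sides vanish since `Gamma 0 = 0`
  · rw [Gamma_add_one hp, mul_div_mul_left _ _ hp]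

theorem rpow_mul_mul_rpow_pow {s : ℝ} (hs : 0 < s) (α β c : ℝ) (k : ℕ) :
    s ^ β * (c * s ^ α) ^ k = c ^ k * s ^ (k * α + β) := by
  rw [rpow_add hs, mul_comm (k : ℝ), rpow_mul hs.le, rpow_natCast, mul_pow]
  ring

theorem hasSum_rpow_mul_mittagLeffler {α : ℝ} (hα : 0 < α) (β c : ℝ) {s : ℝ} (hs : 0 < s) :
    HasSum (fun k : ℕ => c ^ k * (s ^ (k * α + β) / Gamma (k * α + β + 1)))
      (s ^ β * mittagLeffler α (β + 1) (c * s ^ α)) := by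
  refine ((summable_mittagLeffler hα (β + 1) (c * s ^ α)).hasSum.mul_left (s ^ β)).congr_fun
    fun k => ?_
  rw [← add_assoc, ← mul_div_assoc, ← mul_div_assoc, rpow_mul_mul_rpow_pow hs]

theorem summable_pow_mul_rpow_div_abs_Gamma {α : ℝ} (hα : 0 < α) (β γ c : ℝ) {a : ℝ}
    (ha : 0 < a) :
    Summable fun k : ℕ => |c| ^ k * a ^ (k * α + γ) / |Gamma (k * α + β)| := by
  refine ((summable_pow_div_abs_Gamma hα β (r := |c| * a ^ α) (by positivity)).mul_left
    (a ^ γ)).congr fun k => ?_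
  rw [← mul_div_assoc, rpow_mul_mul_rpow_pow ha]

theorem rpow_le_rpow_add_rpow {a b y : ℝ} (ha : 0 < a) (hy : y ∈ Icc a b) (p : ℝ) :
    y ^ p ≤ a ^ p + b ^ p := by
  have hy0 : 0 < y := ha.trans_le hy.1
  rcases le_total 0 p with hp | hp
  · exact (rpow_le_rpow hy0.le hy.2 hp).trans (le_add_of_nonneg_left (by positivity))
  · exact (rpow_le_rpow_of_nonpos ha hy.1 hp).trans
      (le_add_of_nonneg_right (rpow_nonneg (hy0.le.trans hy.2) p))

theorem hasDerivAt_rpow_mul_mittagLeffler {α : ℝ} (hα : 0 < α) (β c : ℝ) {s : ℝ}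
    (hs : 0 < s) :
    HasDerivAt (fun y => y ^ β * mittagLeffler α (β + 1) (c * y ^ α))
      (s ^ (β - 1) * mittagLeffler α β (c * s ^ α)) s := by
  have hs2 : 0 < s / 2 := by positivity
  have hmem : s ∈ Ioo (s / 2) (2 * s) := ⟨by linarith, by linarith⟩
  have hbound : ∀ (k : ℕ), ∀ y ∈ Ioo (s / 2) (2 * s),
      ‖c ^ k * (y ^ (k * α + β - 1) / Gamma (k * α + β))‖
        ≤ |c| ^ k * (s / 2) ^ (k * α + (β - 1)) / |Gamma (k * α + β)|
          + |c| ^ k * (2 * s) ^ (k * α + (β - 1)) / |Gamma (k * α + β)| := by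
    intro k y hy
    rw [norm_mul, norm_pow, norm_div, Real.norm_eq_abs, Real.norm_eq_abs, Real.norm_eq_abs,
      abs_of_pos (rpow_pos_of_pos (hs2.trans hy.1) _), add_sub_assoc, ← add_div, ← mul_add,
      mul_div_assoc]
    gcongr
    exact rpow_le_rpow_add_rpow hs2 (Ioo_subset_Icc_self hy) _
  have hseries :
      HasDerivAt (fun y => ∑' k : ℕ, c ^ k * (y ^ (k * α + β) / Gamma (k * α + β + 1)))
      (∑' k : ℕ, c ^ k * (s ^ (k * α + β - 1) / Gamma (k * α + β))) s :=
    hasDerivAt_tsum_of_isPreconnected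
      ((summable_pow_mul_rpow_div_abs_Gamma hα β _ c hs2).add
        (summable_pow_mul_rpow_div_abs_Gamma hα β _ c (by positivity)))
      isOpen_Ioo isPreconnected_Ioo
      (fun k y hy => (hasDerivAt_rpow_div_Gamma _ (hs2.trans hy.1)).const_mul _) hbound hmem
      (hasSum_rpow_mul_mittagLeffler hα β c hs).summable hmem
  have hvalue := (hasSum_rpow_mul_mittagLeffler hα (β - 1) c hs).tsum_eq
  simp only [sub_add_cancel, ← add_sub_assoc] at hvalue
  rw [← hvalue]
  refine hseries.congr_of_eventuallyEq ?_
  filter_upwards [Ioi_mem_nhds hs] with y hy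
  exact (hasSum_rpow_mul_mittagLeffler hα β c hy).tsum_eq.symm

theorem iteratedDeriv_rpow_mul_mittagLeffler {α : ℝ} (hα : 0 < α) (β c : ℝ) (n : ℕ) {s : ℝ}
    (hs : 0 < s) :
    iteratedDeriv n (fun y => y ^ β * mittagLeffler α (β + 1) (c * y ^ α)) s
      = s ^ (β - n) * mittagLeffler α (β - n + 1) (c * s ^ α) := by
  induction n generalizing s with
  | zero => simp
  | succ n ih =>
    have hnear : iteratedDeriv n (fun y => y ^ β * mittagLeffler α (β + 1) (c * y ^ α))
        =ᶠ[nhds s] fun y => y ^ (β - n) * mittagLeffler α (β - n + 1) (c * y ^ α) :=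
      eventually_of_mem (Ioi_mem_nhds hs) fun y hy => ih hy
    rw [iteratedDeriv_succ, hnear.deriv_eq, (hasDerivAt_rpow_mul_mittagLeffler hα _ c hs).deriv]
    push_cast
    ring_nf

theorem iteratedDeriv_mittagLeffler_general (lam α t : ℝ) (hα : 0 < α)
    (ht : 0 < t) (n : ℕ) (hn : 1 ≤ n) :
    iteratedDeriv n (fun s : ℝ => mittagLeffler α 1 (-lam * s ^ α)) t
      = -lam * t ^ (α - (n : ℝ)) * mittagLeffler α (α - (n : ℝ) + 1) (-lam * t ^ α) := by
  have h := iteratedDeriv_rpow_mul_mittagLeffler hα 0 (-lam) n ht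
  simp only [rpow_zero, one_mul, zero_add, zero_sub] at h
  have hpole : Gamma (-(n : ℝ) + 1) = 0 := by
    obtain ⟨m, rfl⟩ := Nat.exists_eq_add_of_le' hn
    simpa using Gamma_neg_nat_eq_zero m
  rw [h, mittagLeffler_eq_inv_Gamma_add_mul hα, hpole, inv_zero, zero_add,
    show α - n = -n + α by ring, rpow_add ht, show α + (-n + 1) = -n + α + 1 by ring]
  ring

/-- Lemma 2.1: the n-th derivative of $t ↦ E_{α,1}(-λ t^α)$ equals
$-λ t^{α-n} E_{α,α-n+1}(-λ t^α)$ for $λ>0$, $α>0$, $t>0$, $n ∈ ℕ^+$. -/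
theorem iteratedDeriv_mittagLeffler (lam α t : ℝ) (hlam : 0 < lam) (hα : 0 < α)
    (ht : 0 < t) (n : ℕ) (hn : 1 ≤ n) :
    iteratedDeriv n (fun s : ℝ => mittagLeffler α 1 (-lam * s ^ α)) t
      = -lam * t ^ (α - (n : ℝ)) * mittagLeffler α (α - (n : ℝ) + 1) (-lam * t ^ α) :=
  iteratedDeriv_mittagLeffler_general lam α t hα ht n hn
end

section
/- Let 0 < α < 1 and λ > 0. Then for every t > 0, (1/Γ(1−α)) ∫_0^t (t−s)^{−α} (d/ds E_{α,1}(−λ s^α)) ds = −λ E_{α,1}(−λ t^α); that is, y(t) = E_{α,1}(−λ t^α) solves the fractional ordinary differential equation ∂_t^α y = −λ y with y(0) = 1, where ∂_t^α denotes the Djrbashian–Caputo fractional derivative of order α. -/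
/-!
Differentiating `E_{α,1}(c s^α) = ∑ₖ cᵏ s^{kα} / Γ(kα+1)` term by term gives
`∑ₖ cᵏ s^{kα-1} / Γ(kα)`. Against the kernel `(t-s)^{-α}` each term is a Beta integral,
`∫₀ᵗ (t-s)^{-α} s^{kα-1} ds = B(1-α, kα) t^{kα-α}`, so the Caputo derivative sends the `k`-th term
to `Γ(1-α) c` times the `(k-1)`-st term of `E_{α,1}(c t^α)`, while the constant term is killed.
Summing over `k` and interchanging sum and integral (legitimate since the same computation
with `|c|` gives a convergent series) yields `∂_t^α E_{α,1}(c t^α) = c E_{α,1}(c t^α)`.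
All the series converge because `Γ(kα + b)` outgrows every geometric sequence.
-/

open Real Filter Set

open MeasureTheory

theorem rpow_le_sq_mul_exp_mul_Gamma {M y : ℝ} (hM : 1 ≤ M) (hy : 2 ≤ y) :
    M ^ y ≤ M ^ 2 * exp M * Gamma y := by
  obtain ⟨m, hm2, hm, hmy⟩ : ∃ m : ℕ, (2 : ℝ) ≤ m + 1 ∧ (m : ℝ) + 1 ≤ y ∧ y < m + 2 := by
    have h2 : (2 : ℝ) ≤ ⌊y⌋₊ := by exact_mod_cast Nat.le_floor (by exact_mod_cast hy)
    refine ⟨⌊y⌋₊ - 1, ?_⟩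
    rw [Nat.cast_sub (by exact_mod_cast one_le_two.trans h2)]
    push_cast
    refine ⟨by linarith, ?_, ?_⟩ <;>
      linarith [Nat.floor_le (zero_le_two.trans hy), Nat.lt_floor_add_one y]
  have hfact : (m.factorial : ℝ) ≤ Gamma y := by
    rw [← Gamma_nat_eq_factorial]
    exact Gamma_strictMonoOn_Ici.monotoneOn hm2 (hm2.trans hm) hm
  calc M ^ y ≤ M ^ ((m + 2 : ℕ) : ℝ) :=
        rpow_le_rpow_of_exponent_le hM (by push_cast; linarith)
    _ = M ^ 2 * (M ^ m / m.factorial * m.factorial) := by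
        rw [rpow_natCast, div_mul_cancel₀ _ (by positivity)]; ring
    _ ≤ M ^ 2 * (exp M * Gamma y) := by
        gcongr
        exact pow_div_factorial_le_exp M (by linarith) m
    _ = _ := by ring

theorem summable_pow_div_Gamma {a : ℝ} (ha : 0 < a) (b x : ℝ) :
    Summable fun k : ℕ => x ^ k / Gamma (k * a + b) := by
  set R := |x| + 1
  set M := R ^ a⁻¹
  have hR : 1 ≤ R := by simp [R]
  have hM : 1 ≤ M := one_le_rpow hR (by positivity)
  have hMa : ∀ k : ℕ, M ^ ((k : ℝ) * a) = R ^ k := fun k => by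
    rw [← rpow_mul (by positivity), mul_comm, mul_assoc, mul_inv_cancel₀ ha.ne', mul_one,
      rpow_natCast]
  set C := M ^ (-b) * (M ^ 2 * exp M)
  refine .of_norm_bounded_eventually_nat
    ((summable_geometric_of_lt_one (by positivity) (?_ : |x| / R < 1)).mul_left C) ?_
  · rw [div_lt_one (by positivity)]; simp [R]
  have hk : ∀ᶠ k : ℕ in atTop, 2 ≤ k * a + b :=
    (tendsto_atTop_add_const_right _ b
      (tendsto_natCast_atTop_atTop.atTop_mul_const ha)).eventually_ge_atTop 2
  filter_upwards [hk] with k hk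
  have hG : 0 < Gamma (k * a + b) := Gamma_pos_of_pos (by linarith)
  have hRk : R ^ k ≤ C * Gamma (k * a + b) := by
    calc R ^ k = M ^ (-b) * M ^ ((k : ℝ) * a + b) := by
          rw [← hMa, ← rpow_add (by positivity)]; ring_nf
      _ ≤ C * Gamma (k * a + b) := by
          rw [mul_assoc]; gcongr; exact rpow_le_sq_mul_exp_mul_Gamma hM hk
  rw [norm_div, norm_pow, Real.norm_eq_abs, Real.norm_of_nonneg hG.le, div_pow]
  calc |x| ^ k / Gamma (k * a + b) = |x| ^ k / R ^ k * (R ^ k / Gamma (k * a + b)) := by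
        field_simp
    _ ≤ |x| ^ k / R ^ k * C := by gcongr; rwa [div_le_iff₀ hG]
    _ = C * (|x| ^ k / R ^ k) := mul_comm _ _

theorem integral_sub_rpow_mul_rpow {t β c : ℝ} (ht : 0 < t) (hβ : 0 < β) (hc : 0 < c) :
    ∫ s in 0..t, (t - s) ^ (β - 1) * s ^ (c - 1) =
      Gamma β * Gamma c / Gamma (β + c) * t ^ (β + c - 1) := by
  apply Complex.ofReal_injective
  have hcongr : EqOn (fun s : ℝ => (((t - s) ^ (β - 1) * s ^ (c - 1) : ℝ) : ℂ))
      (fun s : ℝ => (s : ℂ) ^ ((c : ℂ) - 1) * ((t : ℂ) - s) ^ ((β : ℂ) - 1)) (uIcc 0 t) := by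
    intro s hs
    rw [uIcc_of_le ht.le] at hs
    simp only
    rw [Complex.ofReal_mul, Complex.ofReal_cpow (sub_nonneg.2 hs.2),
      Complex.ofReal_cpow hs.1, mul_comm]
    push_cast; rfl
  rw [← intervalIntegral.integral_ofReal, intervalIntegral.integral_congr hcongr,
    Complex.betaIntegral_scaled _ _ ht,
    Complex.betaIntegral_eq_Gamma_mul_div _ _ (by simpa) (by simpa)]
  push_cast
  rw [Complex.ofReal_cpow ht.le, ← Complex.ofReal_add, Complex.Gamma_ofReal, Complex.Gamma_ofReal,
    Complex.Gamma_ofReal]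
  push_cast
  rw [add_comm c β, add_comm (c : ℂ)]
  ring

theorem intervalIntegrable_sub_rpow_mul_rpow {t β c : ℝ} (ht : 0 < t) (hβ : 0 < β) (hc : 0 < c) :
    IntervalIntegrable (fun s => (t - s) ^ (β - 1) * s ^ (c - 1)) volume 0 t := by
  refine intervalIntegral.intervalIntegrable_of_integral_ne_zero ?_
  rw [integral_sub_rpow_mul_rpow ht hβ hc]
  have := Gamma_pos_of_pos hβ
  have := Gamma_pos_of_pos hc
  have := Gamma_pos_of_pos (add_pos hβ hc)
  positivity

/-- The derivative at `s` of the `k`-th term `(c s^α)^k / Γ(kα+1)` of `E_{α,1}(c s^α)`;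
for `k = 0` it vanishes because `Γ 0 = 0` in Mathlib. -/
noncomputable def mlDerivTerm (α c : ℝ) (k : ℕ) (s : ℝ) : ℝ :=
  c ^ k * s ^ (k * α - 1) / Gamma (k * α)

section mlDerivTerm

variable {α : ℝ}

@[simp]
theorem mlDerivTerm_zero (c s : ℝ) : mlDerivTerm α c 0 s = 0 := by
  simp [mlDerivTerm]

theorem norm_mlDerivTerm (hα : 0 ≤ α) (c : ℝ) (k : ℕ) {s : ℝ} (hs : 0 ≤ s) :
    ‖mlDerivTerm α c k s‖ = mlDerivTerm α |c| k s := by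
  rw [mlDerivTerm, mlDerivTerm, norm_div, norm_mul, norm_pow, Real.norm_eq_abs,
    Real.norm_of_nonneg (rpow_nonneg hs _),
    Real.norm_of_nonneg (Gamma_nonneg_of_nonneg (by positivity))]

theorem hasDerivAt_pow_mul_rpow_div_Gamma (c : ℝ) (k : ℕ) {s : ℝ} (hs : 0 < s) :
    HasDerivAt (fun r => (c * r ^ α) ^ k / Gamma (k * α + 1)) (mlDerivTerm α c k s) s := by
  have hpow : (fun r => (c * r ^ α) ^ k / Gamma (k * α + 1)) =ᶠ[nhds s]
      fun r => c ^ k / Gamma (k * α + 1) * r ^ ((k : ℝ) * α) := by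
    filter_upwards [Ioi_mem_nhds hs] with r hr
    rw [mul_pow, ← rpow_natCast, ← rpow_natCast, ← rpow_mul hr.le, mul_comm α]
    ring
  -- `x / Γ(x + 1) = 1 / Γ(x)` also at `x = 0`, where both sides vanish
  have hGamma : (k : ℝ) * α / Gamma (k * α + 1) = 1 / Gamma (k * α) := by
    rcases eq_or_ne ((k : ℝ) * α) 0 with h | h
    · simp [h]
    · rw [Gamma_add_one h, div_mul_cancel_left₀ h, one_div]
  refine (((hasDerivAt_rpow_const (Or.inl hs.ne')).const_mul _).congr_of_eventuallyEq
    hpow).congr_deriv ?_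
  calc c ^ k / Gamma (k * α + 1) * ((k : ℝ) * α * s ^ ((k : ℝ) * α - 1))
      = c ^ k * s ^ ((k : ℝ) * α - 1) * ((k : ℝ) * α / Gamma (k * α + 1)) := by ring
    _ = mlDerivTerm α c k s := by rw [hGamma, mlDerivTerm, mul_one_div]

theorem mlDerivTerm_le (hα : 0 ≤ α) {c : ℝ} (hc : 0 ≤ c) (k : ℕ) {s r : ℝ} (hs : 0 < s)
    (hr : r ∈ Ioo (s / 2) (s + 1)) :
    mlDerivTerm α c k r ≤ 2 / s * ((c * (s + 1) ^ α) ^ k / Gamma (k * α)) := by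
  obtain ⟨hr₁, hr₂⟩ := hr
  have hr₀ : 0 < r := by linarith
  have hrpow : r ^ ((k : ℝ) * α - 1) ≤ 2 / s * ((s + 1) ^ α) ^ k := by
    rw [rpow_sub_one hr₀.ne', ← rpow_natCast, ← rpow_mul (by linarith), mul_comm α,
      div_le_iff₀ hr₀]
    calc r ^ ((k : ℝ) * α) ≤ (s + 1) ^ ((k : ℝ) * α) := by gcongr
      _ = 2 / s * (s + 1) ^ ((k : ℝ) * α) * (s / 2) := by field_simp
      _ ≤ 2 / s * (s + 1) ^ ((k : ℝ) * α) * r := by gcongr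
  have hG : 0 ≤ Gamma (k * α) := Gamma_nonneg_of_nonneg (by positivity)
  calc mlDerivTerm α c k r ≤ c ^ k * (2 / s * ((s + 1) ^ α) ^ k) / Gamma (k * α) := by
        rw [mlDerivTerm]; gcongr
    _ = 2 / s * ((c * (s + 1) ^ α) ^ k / Gamma (k * α)) := by ring

theorem hasDerivAt_mittagLeffler_mul_rpow (hα : 0 < α) (c : ℝ) {s : ℝ} (hs : 0 < s) :
    HasDerivAt (fun r => mittagLeffler α 1 (c * r ^ α)) (∑' k, mlDerivTerm α c k s) s := by
  have hbound : Summable fun k : ℕ => 2 / s * ((|c| * (s + 1) ^ α) ^ k / Gamma (k * α)) := by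
    simpa using (summable_pow_div_Gamma hα 0 (|c| * (s + 1) ^ α)).mul_left (2 / s)
  unfold mittagLeffler
  refine hasDerivAt_tsum_of_isPreconnected (t := Ioo (s / 2) (s + 1)) hbound isOpen_Ioo
    isPreconnected_Ioo
    (fun k r hr => hasDerivAt_pow_mul_rpow_div_Gamma c k (by linarith [hr.1]))
    (fun k r hr => ?_) (y₀ := s) ⟨by linarith, by linarith⟩
    (summable_pow_div_Gamma hα 1 (c * s ^ α)) ⟨by linarith, by linarith⟩
  rw [norm_mlDerivTerm hα.le c k (by linarith [hr.1])]
  exact mlDerivTerm_le hα.le (abs_nonneg c) k hs hr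

variable {t : ℝ}

theorem sub_rpow_mul_mlDerivTerm_succ (c : ℝ) (k : ℕ) (s : ℝ) :
    (t - s) ^ (-α) * mlDerivTerm α c (k + 1) s =
      c ^ (k + 1) / Gamma ((k + 1) * α) * ((t - s) ^ ((1 - α) - 1) * s ^ ((k + 1) * α - 1)) := by
  rw [mlDerivTerm, sub_sub_cancel_left]
  push_cast
  ring

theorem intervalIntegrable_sub_rpow_mul_mlDerivTerm (hα₀ : 0 < α) (hα₁ : α < 1) (ht : 0 < t)
    (c : ℝ) (k : ℕ) :
    IntervalIntegrable (fun s => (t - s) ^ (-α) * mlDerivTerm α c k s) volume 0 t := by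
  cases k with
  | zero => simp
  | succ k =>
    simp_rw [sub_rpow_mul_mlDerivTerm_succ]
    exact (intervalIntegrable_sub_rpow_mul_rpow ht (by linarith) (by positivity)).const_mul _

theorem integral_sub_rpow_mul_mlDerivTerm_succ (hα₀ : 0 < α) (hα₁ : α < 1) (ht : 0 < t)
    (c : ℝ) (k : ℕ) :
    ∫ s in 0..t, (t - s) ^ (-α) * mlDerivTerm α c (k + 1) s =
      Gamma (1 - α) * c * ((c * t ^ α) ^ k / Gamma (k * α + 1)) := by
  have hk : 0 < ((k : ℝ) + 1) * α := by positivity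
  simp_rw [sub_rpow_mul_mlDerivTerm_succ]
  rw [intervalIntegral.integral_const_mul, integral_sub_rpow_mul_rpow ht (by linarith) hk,
    show 1 - α + (k + 1) * α = k * α + 1 by ring, show (k : ℝ) * α + 1 - 1 = k * α by ring,
    mul_pow, ← rpow_mul_natCast ht.le, mul_comm α]
  field_simp [(Gamma_pos_of_pos hk).ne']
  ring

theorem integral_sub_rpow_mul_tsum_mlDerivTerm (hα₀ : 0 < α) (hα₁ : α < 1) (ht : 0 < t)
    (c : ℝ) :
    ∫ s in 0..t, (t - s) ^ (-α) * ∑' k, mlDerivTerm α c k s =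
      Gamma (1 - α) * c * mittagLeffler α 1 (c * t ^ α) := by
  have hsummable (a : ℝ) :
      Summable fun k : ℕ => Gamma (1 - α) * a * ((a * t ^ α) ^ k / Gamma (k * α + 1)) :=
    (summable_pow_div_Gamma hα₀ 1 _).mul_left _
  have hint (k : ℕ) : IntegrableOn (fun s => (t - s) ^ (-α) * mlDerivTerm α c k s) (Ioc 0 t) :=
    (intervalIntegrable_sub_rpow_mul_mlDerivTerm hα₀ hα₁ ht c k).1
  have hnorm (k : ℕ) : ∫ s in Ioc 0 t, ‖(t - s) ^ (-α) * mlDerivTerm α c k s‖ =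
      ∫ s in 0..t, (t - s) ^ (-α) * mlDerivTerm α |c| k s := by
    rw [intervalIntegral.integral_of_le ht.le]
    refine setIntegral_congr_fun measurableSet_Ioc fun s hs => ?_
    rw [norm_mul, norm_mlDerivTerm hα₀.le c k hs.1.le,
      Real.norm_of_nonneg (rpow_nonneg (sub_nonneg.2 hs.2) _)]
  have hsum_norm : Summable fun k => ∫ s in Ioc 0 t, ‖(t - s) ^ (-α) * mlDerivTerm α c k s‖ := by
    rw [← summable_nat_add_iff 1]
    simp_rw [hnorm, integral_sub_rpow_mul_mlDerivTerm_succ hα₀ hα₁ ht]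
    exact hsummable |c|
  calc ∫ s in 0..t, (t - s) ^ (-α) * ∑' k, mlDerivTerm α c k s
      = ∫ s in Ioc 0 t, ∑' k, (t - s) ^ (-α) * mlDerivTerm α c k s := by
        simp_rw [intervalIntegral.integral_of_le ht.le, tsum_mul_left]
    _ = ∑' k, ∫ s in 0..t, (t - s) ^ (-α) * mlDerivTerm α c k s := by
        simp_rw [← integral_tsum_of_summable_integral_norm hint hsum_norm,
          intervalIntegral.integral_of_le ht.le]
    _ = ∑' k : ℕ, Gamma (1 - α) * c * ((c * t ^ α) ^ k / Gamma (k * α + 1)) := by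
        have hsucc := integral_sub_rpow_mul_mlDerivTerm_succ hα₀ hα₁ ht c
        rw [tsum_eq_zero_add' (by simpa only [hsucc] using hsummable c)]
        simp [hsucc]
    _ = Gamma (1 - α) * c * mittagLeffler α 1 (c * t ^ α) := tsum_mul_left

end mlDerivTerm

theorem caputo_mittagLeffler_general (α lam : ℝ) (hα0 : 0 < α) (hα1 : α < 1) :
    ∀ t > (0:ℝ),
      (1 / Real.Gamma (1 - α)) *
        ∫ s in (0:ℝ)..t,
          (t - s) ^ (-α) * deriv (fun r : ℝ => mittagLeffler α 1 (-lam * r ^ α)) s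
      = -lam * mittagLeffler α 1 (-lam * t ^ α) := by
  intro t ht
  have hderiv : ∀ s ∈ Ioc 0 t,
      (t - s) ^ (-α) * deriv (fun r => mittagLeffler α 1 (-lam * r ^ α)) s =
        (t - s) ^ (-α) * ∑' k, mlDerivTerm α (-lam) k s := fun s hs => by
    rw [(hasDerivAt_mittagLeffler_mul_rpow hα0 (-lam) hs.1).deriv]
  rw [intervalIntegral.integral_of_le ht.le, setIntegral_congr_fun measurableSet_Ioc hderiv,
    ← intervalIntegral.integral_of_le ht.le,
    integral_sub_rpow_mul_tsum_mlDerivTerm hα0 hα1 ht (-lam)]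
  field_simp [(Gamma_pos_of_pos (sub_pos.2 hα1)).ne']

/-- $y(t)=E_{α,1}(-λ t^α)$ solves the Caputo fractional ODE $∂_t^α y = -λ y$:
for every $t>0$,
$(1/Γ(1-α))∫_0^t (t-s)^{-α} y'(s)\,ds = -λ E_{α,1}(-λ t^α)$. -/
theorem caputo_mittagLeffler (α lam : ℝ) (hα0 : 0 < α) (hα1 : α < 1) (hlam : 0 < lam) :
    ∀ t > (0:ℝ),
      (1 / Real.Gamma (1 - α)) *
        ∫ s in (0:ℝ)..t,
          (t - s) ^ (-α) * deriv (fun r : ℝ => mittagLeffler α 1 (-lam * r ^ α)) s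
      = -lam * mittagLeffler α 1 (-lam * t ^ α) :=
  caputo_mittagLeffler_general α lam hα0 hα1
end

section
/- Let (λ_k)_{k≥1} be a strictly increasing sequence of positive real numbers and let (c_k)_{k≥1} be real numbers with ∑_{k=1}^∞ |c_k| < ∞. If for every η > 0 we have ∑_{k=1}^∞ c_k λ_k / (η + λ_k) = 0, then c_k = 0 for every k. -/
/-!
Divided differences of `F η = ∑ cₖ λₖ / (η + λₖ)` at the distinct points `qⱼ = 1 / (j + 1)`
vanish, which gives `∑ₖ cₖ λₖ / ∏_{j ≤ n} (qⱼ + λₖ) = 0` for every `n`. If `cₖ = 0` for `k < m`,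
multiply by `∏_{j ≤ n} (qⱼ + λₘ)`: the `k = m` term becomes `cₘ λₘ`, and every term with `k > m`
tends to `0` as `n → ∞`, because each factor `(qⱼ + λₘ) / (qⱼ + λₖ)` is at most
`(1 + λₘ) / (1 + λₖ) < 1`. Dominated convergence then forces `cₘ λₘ = 0`.
-/

open Real Filter Set Topology Finset

theorem tsum_div_add_div_add_eq {ι : Type*} (a lam : ι → ℝ) {η μ : ℝ} (hημ : η ≠ μ)
    (hη : ∀ k, η + lam k ≠ 0) (hμ : ∀ k, μ + lam k ≠ 0)
    (hsη : Summable fun k => a k / (η + lam k)) (hsμ : Summable fun k => a k / (μ + lam k)) :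
    ∑' k, a k / (μ + lam k) / (η + lam k) =
      (∑' k, a k / (η + lam k) - ∑' k, a k / (μ + lam k)) / (μ - η) := by
  rw [← hsη.tsum_sub hsμ, ← tsum_div_const]
  congr 1 with k
  have := hη k; have := hμ k; have := sub_ne_zero.mpr hημ.symm
  field_simp
  ring

theorem prod_div_add_le_pow {ι : Type*} (s : Finset ι) (q : ι → ℝ) {x y B : ℝ}
    (hq : ∀ j ∈ s, 0 < q j) (hqB : ∀ j ∈ s, q j ≤ B) (hx : 0 ≤ x) (hxy : x ≤ y) :
    ∏ j ∈ s, (q j + x) / (q j + y) ≤ ((B + x) / (B + y)) ^ s.card := by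
  rw [← prod_const]
  refine prod_le_prod (fun j hj => ?_) fun j hj => ?_ <;> have := hq j hj
  · exact div_nonneg (by linarith) (by linarith)
  · have := hqB j hj
    rw [div_le_div_iff₀ (by linarith) (by linarith)]
    nlinarith

section RatioProduct

variable {q : ℕ → ℝ} {x y B : ℝ}

theorem prod_div_add_nonneg (hq : ∀ j, 0 < q j) (hx : 0 ≤ x) (hxy : x ≤ y) (n : ℕ) :
    0 ≤ ∏ j ∈ range n, (q j + x) / (q j + y) :=
  prod_nonneg fun j _ => div_nonneg (by linarith [hq j]) (by linarith [hq j])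

theorem mul_prod_div_add_le (hq : ∀ j, 0 < q j) (hqB : ∀ j, q j ≤ B) (hx : 0 ≤ x)
    (hxy : x ≤ y) (n : ℕ) :
    y * ∏ j ∈ range (n + 1), (q j + x) / (q j + y) ≤ B + x := by
  have hB : 0 < B := (hq 0).trans_le (hqB 0)
  have hρ : (B + x) / (B + y) ≤ 1 := (div_le_one (by linarith)).mpr (by linarith)
  calc y * ∏ j ∈ range (n + 1), (q j + x) / (q j + y)
      ≤ y * ((B + x) / (B + y)) ^ (n + 1) := by
        gcongr
        · linarith
        · simpa using
            prod_div_add_le_pow (range (n + 1)) q (fun j _ => hq j) (fun j _ => hqB j) hx hxy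
    _ ≤ y * ((B + x) / (B + y)) := by
        gcongr
        · linarith
        · exact pow_le_of_le_one (div_nonneg (by linarith) (by linarith)) hρ n.succ_ne_zero
    _ ≤ B + x := by
        rw [mul_div_assoc', div_le_iff₀ (by linarith)]
        nlinarith

theorem tendsto_mul_prod_div_add (hq : ∀ j, 0 < q j) (hqB : ∀ j, q j ≤ B) (hx : 0 ≤ x)
    (hxy : x < y) :
    Tendsto (fun n => y * ∏ j ∈ range n, (q j + x) / (q j + y)) atTop (𝓝 0) := by
  have hB : 0 < B := (hq 0).trans_le (hqB 0)
  have hρ : (B + x) / (B + y) < 1 := (div_lt_one (by linarith)).mpr (by linarith)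
  have hρ0 : 0 ≤ (B + x) / (B + y) := div_nonneg (by linarith) (by linarith)
  refine squeeze_zero (fun n => mul_nonneg (by linarith) (prod_div_add_nonneg hq hx hxy.le n))
    (fun n => ?_) (by simpa using (tendsto_pow_atTop_nhds_zero_of_lt_one hρ0 hρ).const_mul y)
  gcongr
  · linarith
  · simpa using prod_div_add_le_pow (range n) q (fun j _ => hq j) (fun j _ => hqB j) hx hxy.le

end RatioProduct

section Series

variable {lam c q : ℕ → ℝ}

theorem summable_div_prod_div (hpos : ∀ k, 0 < lam k) (hsum : Summable fun k => |c k|)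
    (hq : ∀ j, 0 < q j) (n : ℕ) {η : ℝ} (hη : 0 ≤ η) :
    Summable fun k => c k * lam k / (∏ j ∈ range n, (q j + lam k)) / (η + lam k) := by
  refine (hsum.div_const (∏ j ∈ range n, q j)).of_norm_bounded fun k => ?_
  have hlam := hpos k
  have hprod : ∏ j ∈ range n, q j ≤ ∏ j ∈ range n, (q j + lam k) :=
    prod_le_prod (fun j _ => (hq j).le) fun j _ => by linarith
  have hq' : 0 < ∏ j ∈ range n, q j := prod_pos fun j _ => hq j
  rw [Real.norm_eq_abs, abs_div, abs_div, abs_mul, abs_of_pos hlam,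
    abs_of_pos (hq'.trans_le hprod), abs_of_pos (add_pos_of_nonneg_of_pos hη hlam),
    div_right_comm, mul_div_assoc]
  gcongr
  calc |c k| * (lam k / (η + lam k)) ≤ |c k| * 1 := by
        gcongr; rw [div_le_one (by linarith)]; linarith
    _ = |c k| := mul_one _

theorem tsum_div_prod_div_eq_zero (hpos : ∀ k, 0 < lam k) (hsum : Summable fun k => |c k|)
    (hq : ∀ j, 0 < q j) (hqinj : Function.Injective q)
    (h : ∀ η > (0:ℝ), ∑' k, c k * lam k / (η + lam k) = 0) (n : ℕ) {η : ℝ} (hη : 0 < η)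
    (hηq : ∀ j < n, q j ≠ η) :
    ∑' k, c k * lam k / (∏ j ∈ range n, (q j + lam k)) / (η + lam k) = 0 := by
  induction n generalizing η with
  | zero => simpa using h η hη
  | succ n ih =>
    have hne : ∀ {μ : ℝ}, 0 < μ → ∀ k, μ + lam k ≠ 0 := fun hμ k => (add_pos hμ (hpos k)).ne'
    simp only [prod_range_succ, ← div_div]
    rw [tsum_div_add_div_add_eq _ _ (hηq n n.lt_succ_self).symm (hne hη) (hne (hq n))
      (summable_div_prod_div hpos hsum hq n hη.le)
      (summable_div_prod_div hpos hsum hq n (hq n).le),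
      ih hη fun j hj => hηq j (hj.trans n.lt_succ_self),
      ih (hq n) fun j hj => hqinj.ne hj.ne, sub_self, zero_div]

theorem tsum_div_prod_eq_zero (hpos : ∀ k, 0 < lam k) (hsum : Summable fun k => |c k|)
    (hq : ∀ j, 0 < q j) (hqinj : Function.Injective q)
    (h : ∀ η > (0:ℝ), ∑' k, c k * lam k / (η + lam k) = 0) (n : ℕ) :
    ∑' k, c k * lam k / ∏ j ∈ range (n + 1), (q j + lam k) = 0 := by
  simpa only [prod_range_succ, ← div_div] using
    tsum_div_prod_div_eq_zero hpos hsum hq hqinj h n (hq n) fun j hj => hqinj.ne hj.ne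

theorem eq_zero_of_forall_lt_eq_zero (hmono : StrictMono lam) (hpos : ∀ k, 0 < lam k)
    (hsum : Summable fun k => |c k|) (h : ∀ η > (0:ℝ), ∑' k, c k * lam k / (η + lam k) = 0)
    {m : ℕ} (hm : ∀ j < m, c j = 0) : c m = 0 := by
  set q : ℕ → ℝ := fun j => 1 / ((j : ℝ) + 1)
  have hq : ∀ j, 0 < q j := fun j => by positivity
  have hq1 : ∀ j, q j ≤ 1 := fun j => (div_le_one (by positivity)).mpr (by simp)
  have hqinj : Function.Injective q := fun a b hab => by simpa [q] using hab
  set t : ℕ → ℕ → ℝ := fun n k =>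
    c k * (lam k * ∏ j ∈ range (n + 1), (q j + lam m) / (q j + lam k))
  have hsum_t : ∀ n, ∑' k, t n k = 0 := by
    intro n
    have ht : ∀ k, t n k = (∏ j ∈ range (n + 1), (q j + lam m)) *
        (c k * lam k / ∏ j ∈ range (n + 1), (q j + lam k)) := fun k => by
      simp only [t, prod_div_distrib]; ring
    simp only [ht, tsum_mul_left, tsum_div_prod_eq_zero hpos hsum hq hqinj h n, mul_zero]
  have hbound : ∀ n k, ‖t n k‖ ≤ |c k| * (1 + lam m) := by
    intro n k
    rcases lt_or_ge k m with hk | hk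
    · simp [t, hm k hk]
    · rw [norm_mul, norm_eq_abs, norm_of_nonneg
        (mul_nonneg (hpos k).le (prod_div_add_nonneg hq (hpos m).le (hmono.monotone hk) _))]
      exact mul_le_mul_of_nonneg_left
        (mul_prod_div_add_le hq hq1 (hpos m).le (hmono.monotone hk) n) (abs_nonneg _)
  have hlim : ∀ k, Tendsto (t · k) atTop (𝓝 (if k = m then c m * lam m else 0)) := by
    intro k
    rcases lt_trichotomy k m with hk | rfl | hk
    · simp [t, hm k hk, hk.ne]
    · have : ∀ j, q j + lam k ≠ 0 := fun j => (add_pos (hq j) (hpos k)).ne'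
      simp only [t, if_pos, div_self (this _), prod_const_one, mul_one]
      exact tendsto_const_nhds
    · rw [if_neg hk.ne', ← mul_zero (c k)]
      exact ((tendsto_mul_prod_div_add hq hq1 (hpos m).le (hmono hk)).comp
        (tendsto_add_atTop_nat 1)).const_mul (c k)
  have hlim_sum := tendsto_tsum_of_dominated_convergence (hsum.mul_right _) hlim
    (Eventually.of_forall hbound)
  simp only [hsum_t, tsum_ite_eq] at hlim_sum
  exact (mul_eq_zero.mp (tendsto_nhds_unique tendsto_const_nhds hlim_sum).symm).resolve_right
    (hpos m).ne'

end Series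

/-- If `(λₖ)` is strictly increasing and positive, `∑|cₖ| < ∞`, and
`∑ₖ cₖ λₖ/(η+λₖ) = 0` for every `η > 0`, then every `cₖ = 0`. -/
theorem vanishing_residues (lam c : ℕ → ℝ) (hmono : StrictMono lam)
    (hpos : ∀ k, 0 < lam k) (hsum : Summable fun k => |c k|)
    (h : ∀ η > (0:ℝ), ∑' k, c k * lam k / (η + lam k) = 0) :
    ∀ k, c k = 0 := by
  intro k
  induction k using Nat.strong_induction_on with
  | _ m ih => exact eq_zero_of_forall_lt_eq_zero hmono hpos hsum h ih
end
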